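/- (Expected per-iteration descent of Shotgun.) Fix x ≥ 0 at which F is differentiable, suppose F satisfies Assumption 2 with constant β > 0, and let ρ be the spectral radius of AᵀA. Perform one Shotgun iteration with P parallel updates at x, producing the random collective update Δx. Then E_{P_t}[ F(x + Δx) ] − F(x) ≤ −(Pβ/2) · (1 − (P−1)ρ/m) · E_j[ (δx_j)² ], where E_j is over a uniform index j ∈ {1,…,m} and δx_j = max{ −x_j , −(∇F(x))_j / β }. In particular, if P < m/ρ + 1 then Shotgun decreases the objective in expectation. -/

import Mathlib

/-!
Assumption 2 bounds `F (x + Δx)` by a quadratic polynomial in the sparse update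
`Δx = ∑ₖ δ_{iₖ} e_{iₖ}`. Averaging over the `P` independent uniform indices, the linear term gives
`P · E_j[δ_j ∇_j F]`, the `P` diagonal pairs `k = l` of the quadratic term give `P · E_j[δ_j²]`
(the columns of `A` are unit vectors), and each of the `P(P-1)` off-diagonal pairs, whose indices
are independent, gives `δᵀAᵀAδ / m² ≤ ρ E_j[δ_j²] / m` by the Rayleigh bound for `AᵀA`.
The clipped coordinate step satisfies `δ_j ∇_j F ≤ -β δ_j²`, and collecting terms yields the bound.
-/

open Matrix Finset

/-- `(∇F(x))_j`, the `j`-th coordinate of the gradient of `F` at `x`. -/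
noncomputable def grad {m : ℕ} (F : (Fin m → ℝ) → ℝ) (x : Fin m → ℝ) (j : Fin m) : ℝ :=
  fderiv ℝ F x (Pi.single j 1)

/-- Assumption 2 with constant `β > 0`: for every feasible `x` and `Δx`,
`F(x + Δx) ≤ F(x) + Δxᵀ ∇F(x) + (β/2) Δxᵀ AᵀA Δx`. -/
def Assumption2 {n m : ℕ} (A : Matrix (Fin n) (Fin m) ℝ) (β : ℝ)
    (F : (Fin m → ℝ) → ℝ) : Prop :=
  ∀ x Δx : Fin m → ℝ, 0 ≤ x → 0 ≤ x + Δx →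
    F (x + Δx) ≤ F x + (∑ j, Δx j * grad F x j) + β / 2 * (Δx ⬝ᵥ (Aᵀ * A).mulVec Δx)

/-- The spectral radius of a real square matrix: the supremum of the absolute values of its
eigenvalues. -/
noncomputable def specRad {ι : Type} [Fintype ι] [DecidableEq ι]
    (M : Matrix ι ι ℝ) : ℝ :=
  sSup {r : ℝ | ∃ μ : ℝ, Module.End.HasEigenvalue (Matrix.toLin' M) μ ∧ r = |μ|}

open Module.End
open scoped BigOperators

section RandomIndices

variable {ι α : Type*} [Fintype ι] [DecidableEq ι] [Fintype α]

theorem Fintype.expect_pi_apply {M : Type*} [AddCommMonoid M] [Module ℚ≥0 M] (k : ι)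
    (f : α → M) : 𝔼 σ : ι → α, f (σ k) = 𝔼 a, f a := by
  cases isEmpty_or_nonempty α
  · have : IsEmpty (ι → α) := ⟨fun σ => isEmptyElim (σ k)⟩
    simp
  calc 𝔼 σ : ι → α, f (σ k) = 𝔼 p : α × ({j // j ≠ k} → α), f p.1 :=
        Fintype.expect_equiv (Equiv.funSplitAt k α) _ _ fun σ => rfl
    _ = 𝔼 a, f a := by
        rw [← univ_product_univ, expect_product]
        simp only [Fintype.expect_const]

theorem Fintype.expect_pi_apply_apply {M : Type*} [AddCommMonoid M] [Module ℚ≥0 M] {k l : ι}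
    (hlk : l ≠ k) (g : α → α → M) : 𝔼 σ : ι → α, g (σ k) (σ l) = 𝔼 a, 𝔼 b, g a b := by
  calc 𝔼 σ : ι → α, g (σ k) (σ l)
        = 𝔼 p : α × ({j // j ≠ k} → α), g p.1 (p.2 ⟨l, hlk⟩) :=
        Fintype.expect_equiv (Equiv.funSplitAt k α) _ _ fun σ => by
          simp [Equiv.funSplitAt_apply]
    _ = 𝔼 a, 𝔼 b, g a b := by
        rw [← univ_product_univ, expect_product]
        simp only [Fintype.expect_pi_apply]

theorem Fintype.expect_sum_sum_pi_apply_apply {𝕜 : Type*} [Field 𝕜] [CharZero 𝕜]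
    (g : α → α → 𝕜) :
    𝔼 σ : ι → α, ∑ k, ∑ l, g (σ k) (σ l) =
      Fintype.card ι * 𝔼 a, g a a + Fintype.card ι * (Fintype.card ι - 1) * 𝔼 a, 𝔼 b, g a b := by
  have row : ∀ k : ι, ∑ l, 𝔼 σ : ι → α, g (σ k) (σ l) =
      𝔼 a, g a a + (Fintype.card ι - 1) * 𝔼 a, 𝔼 b, g a b := by
    intro k
    rw [← add_sum_erase _ _ (mem_univ k), Fintype.expect_pi_apply k (fun a => g a a),
      Finset.sum_congr rfl fun l hl => Fintype.expect_pi_apply_apply (ne_of_mem_erase hl) g,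
      sum_const, card_erase_of_mem (mem_univ k), nsmul_eq_mul, card_univ,
      Nat.cast_pred (Fintype.card_pos_iff.2 ⟨k⟩)]
  simp only [expect_sum_comm, row, sum_const, card_univ, nsmul_eq_mul]
  ring

end RandomIndices

section SparseVectors

variable {ι α R : Type*} [Fintype ι] [Fintype α] [DecidableEq α] [CommSemiring R]

theorem sum_single_dotProduct (s : ι → α) (c : ι → R) (w : α → R) :
    (∑ k, Pi.single (s k) (c k)) ⬝ᵥ w = ∑ k, c k * w (s k) := by
  simp only [sum_dotProduct, single_dotProduct]

theorem sum_single_dotProduct_mulVec_sum_single (s : ι → α) (c : ι → R) (M : Matrix α α R) :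
    (∑ k, Pi.single (s k) (c k)) ⬝ᵥ M *ᵥ (∑ l, Pi.single (s l) (c l)) =
      ∑ k, ∑ l, c k * M (s k) (s l) * c l := by
  simp only [sum_single_dotProduct, mulVec_sum, Finset.sum_apply, mulVec, dotProduct_single,
    mul_sum, mul_assoc]

end SparseVectors

theorem LinearMap.IsSymmetric.inner_map_self_le {E : Type*} [NormedAddCommGroup E]
    [InnerProductSpace ℝ E] [FiniteDimensional ℝ E] {T : E →ₗ[ℝ] E} (hT : T.IsSymmetric)
    {c : ℝ} (hc : ∀ μ, HasEigenvalue T μ → μ ≤ c) (v : E) :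
    inner ℝ (T v) v ≤ c * ‖v‖ ^ 2 := by
  set b := hT.eigenvectorBasis rfl
  calc inner ℝ (T v) v = inner ℝ (b.repr (T v)) (b.repr v) := (b.repr.inner_map_map _ _).symm
    _ = ∑ i, hT.eigenvalues rfl i * b.repr v i ^ 2 := by
        simp only [PiLp.inner_apply, hT.eigenvectorBasis_apply_self_apply, RCLike.inner_apply,
          conj_trivial, RCLike.ofReal_real_eq_id, id_eq, b]
        exact Finset.sum_congr rfl fun i _ => by ring
    _ ≤ ∑ i, c * b.repr v i ^ 2 := by
        gcongr with i
        exact hc _ (hT.hasEigenvalue_eigenvalues rfl i)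
    _ = c * ‖v‖ ^ 2 := by
        rw [← mul_sum, ← b.repr.norm_map, EuclideanSpace.real_norm_sq_eq]

section SpectralRadius

variable {ι : Type} [Fintype ι] [DecidableEq ι] {M : Matrix ι ι ℝ}

theorem abs_le_specRad {μ : ℝ} (hμ : HasEigenvalue (toLin' M) μ) : |μ| ≤ specRad M := by
  refine le_csSup ?_ ⟨μ, hμ, rfl⟩
  refine ((finite_hasEigenvalue (toLin' M)).image abs).bddAbove.mono ?_
  rintro _ ⟨μ', hμ', rfl⟩
  exact ⟨μ', hμ', rfl⟩

theorem Matrix.IsHermitian.dotProduct_mulVec_le_specRad_mul (hM : M.IsHermitian) (v : ι → ℝ) :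
    v ⬝ᵥ M *ᵥ v ≤ specRad M * (v ⬝ᵥ v) := by
  have hT : (toEuclideanLin M).IsSymmetric := isSymmetric_toEuclideanLin_iff.2 hM
  have key := hT.inner_map_self_le (c := specRad M) (fun μ hμ => by
    refine (le_abs_self μ).trans (abs_le_specRad ?_)
    rw [hasEigenvalue_iff_mem_spectrum, spectrum_toLin', ← spectrum_toLpLin 2]
    exact hμ.mem_spectrum) (WithLp.toLp 2 v)
  rw [EuclideanSpace.real_norm_sq_eq] at key
  simpa [EuclideanSpace.inner_eq_star_dotProduct, dotProduct_comm, dotProduct, sq] using key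

theorem Matrix.IsHermitian.expect_expect_le_specRad_div_mul (hM : M.IsHermitian) (v : ι → ℝ) :
    𝔼 i, 𝔼 j, v i * M i j * v j ≤ specRad M / Fintype.card ι * 𝔼 j, v j ^ 2 := by
  have hquad : ∑ i, ∑ j, v i * M i j * v j ≤ specRad M * ∑ j, v j ^ 2 := by
    simpa [dotProduct, mulVec, mul_sum, mul_assoc, sq] using
      hM.dotProduct_mulVec_le_specRad_mul v
  simp only [Fintype.expect_eq_sum_div_card, ← sum_div]
  calc (∑ i, ∑ j, v i * M i j * v j) / Fintype.card ι / Fintype.card ι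
      ≤ specRad M * (∑ j, v j ^ 2) / Fintype.card ι / Fintype.card ι := by gcongr
    _ = specRad M / Fintype.card ι * ((∑ j, v j ^ 2) / Fintype.card ι) := by ring

end SpectralRadius

theorem max_neg_neg_div_mul_le_neg_mul_sq {β x g : ℝ} (hβ : 0 < β) (hx : 0 ≤ x) :
    max (-x) (-g / β) * g ≤ -(β * max (-x) (-g / β) ^ 2) := by
  set d := max (-x) (-g / β) with hd
  have hnewton : 0 ≤ β * d + g := by
    have := (div_le_iff₀ hβ).1 (le_max_right (-x) (-g / β))
    linarith
  suffices d * (β * d + g) ≤ 0 by linarith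
  rcases max_choice (-x) (-g / β) with h | h
  · exact mul_nonpos_of_nonpos_of_nonneg (by linarith) hnewton
  · rw [← hd] at h
    rw [h, mul_div_cancel₀ _ hβ.ne', neg_add_cancel, mul_zero]

theorem mul_one_sub_mul_div_nonneg {P : ℕ} {m ρ : ℝ} (hm : 0 < m) (h : (P : ℝ) < m / ρ + 1) :
    0 ≤ (P : ℝ) * (1 - (P - 1) * ρ / m) := by
  rcases P.eq_zero_or_pos with rfl | hP
  · simp
  have hP : (1 : ℝ) ≤ P := by exact_mod_cast hP
  refine mul_nonneg (by linarith) (sub_nonneg.2 ((div_le_one hm).2 ?_))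
  rcases le_or_gt ρ 0 with hρ | hρ
  · nlinarith
  · have := (lt_div_iff₀ hρ).1 (show (P : ℝ) - 1 < m / ρ by linarith)
    linarith

theorem Assumption2.expect_le {n m : ℕ} {A : Matrix (Fin n) (Fin m) ℝ} {β : ℝ}
    {F : (Fin m → ℝ) → ℝ} (hF : Assumption2 A β F) (hm : 0 < m) {ι : Type*} [Fintype ι]
    [DecidableEq ι] {x : Fin m → ℝ} (hx : 0 ≤ x) (δ : Fin m → ℝ)
    (hfeas : ∀ σ : ι → Fin m, 0 ≤ x + ∑ k, Pi.single (σ k) (δ (σ k))) :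
    𝔼 σ : ι → Fin m, F (x + ∑ k, Pi.single (σ k) (δ (σ k))) ≤
      F x + Fintype.card ι * 𝔼 j, δ j * grad F x j +
        β / 2 * (Fintype.card ι * 𝔼 j, δ j * (Aᵀ * A) j j * δ j +
          Fintype.card ι * (Fintype.card ι - 1) * 𝔼 i, 𝔼 j, δ i * (Aᵀ * A) i j * δ j) := by
  have : Nonempty (Fin m) := ⟨⟨0, hm⟩⟩
  calc 𝔼 σ : ι → Fin m, F (x + ∑ k, Pi.single (σ k) (δ (σ k)))
      ≤ 𝔼 σ : ι → Fin m, (F x + ∑ k, δ (σ k) * grad F x (σ k) +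
          β / 2 * ∑ k, ∑ l, δ (σ k) * (Aᵀ * A) (σ k) (σ l) * δ (σ l)) := by
        refine expect_le_expect fun σ _ => ?_
        have := hF x _ hx (hfeas σ)
        rwa [← dotProduct, sum_single_dotProduct, sum_single_dotProduct_mulVec_sum_single] at this
    _ = _ := by
        simp only [expect_add_distrib, Fintype.expect_const, ← mul_expect, expect_sum_comm,
          Fintype.expect_pi_apply _ (fun j => δ j * grad F x j),
          Fintype.expect_sum_sum_pi_apply_apply (fun i j => δ i * (Aᵀ * A) i j * δ j),
          sum_const, card_univ, nsmul_eq_mul]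

theorem shotgun_expected_descent_general {n m P : ℕ} (hm : 0 < m)
    (A : Matrix (Fin n) (Fin m) ℝ) (hA : ∀ j : Fin m, ∑ i, (A i j) ^ 2 = 1)
    (β : ℝ) (hβ : 0 < β) (F : (Fin m → ℝ) → ℝ)
    (hF : Assumption2 A β F)
    (x : Fin m → ℝ) (hx : 0 ≤ x)
    (ρ : ℝ) (hρ : ρ = specRad (Aᵀ * A))
    (δ : Fin m → ℝ) (hδ : ∀ j, δ j = max (-(x j)) (-(grad F x j) / β))
    (Δ : (Fin P → Fin m) → (Fin m → ℝ))
    (hΔ : ∀ σ : Fin P → Fin m, Δ σ = ∑ j : Fin P, Pi.single (σ j) (δ (σ j)))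
    (hfeas : ∀ σ : Fin P → Fin m, 0 ≤ x + Δ σ) :
    (1 / (m : ℝ) ^ P) * (∑ σ : Fin P → Fin m, F (x + Δ σ)) - F x ≤
      -((P : ℝ) * β / 2) * (1 - ((P : ℝ) - 1) * ρ / m) *
        ((1 / (m : ℝ)) * ∑ j, (δ j) ^ 2) ∧
    ((P : ℝ) < m / ρ + 1 →
      (1 / (m : ℝ) ^ P) * (∑ σ : Fin P → Fin m, F (x + Δ σ)) ≤ F x) := by
  have hdiag : ∀ j, (Aᵀ * A) j j = 1 := fun j => by simpa [Matrix.mul_apply, sq] using hA j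
  have hstep : 𝔼 j, δ j * grad F x j ≤ -β * 𝔼 j, δ j ^ 2 := by
    rw [mul_expect]
    refine expect_le_expect fun j _ => ?_
    rw [hδ j, neg_mul]
    exact max_neg_neg_div_mul_le_neg_mul_sq hβ (hx j)
  have hcross : 𝔼 i, 𝔼 j, δ i * (Aᵀ * A) i j * δ j ≤ ρ / m * 𝔼 j, δ j ^ 2 := by
    have hM : (Aᵀ * A).IsHermitian := by
      simpa [conjTranspose_eq_transpose_of_trivial] using isHermitian_conjTranspose_mul_self A
    simpa [hρ] using hM.expect_expect_le_specRad_div_mul δ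
  have hmean := hF.expect_le hm hx δ fun σ => hΔ σ ▸ hfeas σ
  simp only [Fintype.card_fin, hdiag, mul_one, ← sq, ← hΔ] at hmean
  have hPP : 0 ≤ (P : ℝ) * (P - 1) := by
    nlinarith [(by exact_mod_cast Nat.le_mul_self P : (P : ℝ) ≤ P * P)]
  have descent : 𝔼 σ, F (x + Δ σ) - F x ≤
      -((P : ℝ) * β / 2) * (1 - ((P : ℝ) - 1) * ρ / m) * 𝔼 j, δ j ^ 2 := by
    linear_combination hmean + mul_le_mul_of_nonneg_left hstep (Nat.cast_nonneg P) +
      (1 / 2 : ℝ) * mul_le_mul_of_nonneg_left hcross (mul_nonneg hPP hβ.le)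
  have hB : 0 ≤ 𝔼 j, δ j ^ 2 := expect_nonneg fun j _ => sq_nonneg _
  simp only [Fintype.expect_eq_sum_div_card, Fintype.card_fun, Fintype.card_fin,
    Nat.cast_pow] at descent hB
  simp only [one_div_mul_eq_div]
  refine ⟨descent, fun hP => ?_⟩
  have hfactor := mul_one_sub_mul_div_nonneg (Nat.cast_pos.2 hm) hP
  nlinarith [mul_nonneg (mul_nonneg hfactor hB) hβ.le]

/-- Expected per-iteration descent of Shotgun:
`E_{P_t}[F(x+Δx)] - F(x) ≤ -(Pβ/2)·(1 - (P-1)ρ/m)·E_j[(δx_j)²]`.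
In particular, if `P < m/ρ + 1` then Shotgun decreases the objective in expectation. -/
theorem shotgun_expected_descent {n m P : ℕ} (hm : 0 < m)
    (A : Matrix (Fin n) (Fin m) ℝ) (hA : ∀ j : Fin m, ∑ i, (A i j) ^ 2 = 1)
    (β : ℝ) (hβ : 0 < β) (F : (Fin m → ℝ) → ℝ)
    (hconv : ConvexOn ℝ {z : Fin m → ℝ | 0 ≤ z} F)
    (hF : Assumption2 A β F)
    (x : Fin m → ℝ) (hx : 0 ≤ x) (hdiff : DifferentiableAt ℝ F x)
    (ρ : ℝ) (hρ : ρ = specRad (Aᵀ * A))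
    (δ : Fin m → ℝ) (hδ : ∀ j, δ j = max (-(x j)) (-(grad F x j) / β))
    (Δ : (Fin P → Fin m) → (Fin m → ℝ))
    (hΔ : ∀ σ : Fin P → Fin m, Δ σ = ∑ j : Fin P, Pi.single (σ j) (δ (σ j)))
    (hfeas : ∀ σ : Fin P → Fin m, 0 ≤ x + Δ σ) :
    (1 / (m : ℝ) ^ P) * (∑ σ : Fin P → Fin m, F (x + Δ σ)) - F x ≤
      -((P : ℝ) * β / 2) * (1 - ((P : ℝ) - 1) * ρ / m) *
        ((1 / (m : ℝ)) * ∑ j, (δ j) ^ 2) ∧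
    ((P : ℝ) < m / ρ + 1 →
      (1 / (m : ℝ) ^ P) * (∑ σ : Fin P → Fin m, F (x + Δ σ)) ≤ F x) :=
  shotgun_expected_descent_general hm A hA β hβ F hF x hx ρ hρ δ hδ Δ hΔ hfeas
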